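/- Every nonzero finitely generated ideal of an integral domain D is a cancellation ideal if and only if D is a Prüfer domain. -/

import Mathlib

open FractionalIdeal
set_option linter.unusedSectionVars false

section Aux

variable {D : Type*} [CommRing D] [IsDomain D]

local notation "K" => FractionRing D

/-- Cancellation property for ideals. -/
def CancelsFG (D : Type*) [CommRing D] [IsDomain D] : Prop :=
  ∀ I : Ideal D, I ≠ 0 → I.FG →
    ∀ G H : Ideal D, G ≠ 0 → H ≠ 0 → I * G = I * H → G = H

lemma coeIdeal_fg' {I : Ideal D} (h : I.FG) :
    ((I : FractionalIdeal (nonZeroDivisors D) K) : Submodule D K).FG := by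
  have e : ((I : FractionalIdeal (nonZeroDivisors D) K) : Submodule D K)
      = IsLocalization.coeSubmodule K I := coe_coeIdeal I
  rw [e, IsLocalization.coeSubmodule]
  exact Submodule.FG.map _ h

lemma ideal_mul_ne_zero {I J : Ideal D} (hI : I ≠ 0) (hJ : J ≠ 0) : I * J ≠ 0 := by
  obtain ⟨x, hxI, hx⟩ := Submodule.exists_mem_ne_zero_of_ne_bot hI
  obtain ⟨y, hyJ, hy⟩ := Submodule.exists_mem_ne_zero_of_ne_bot hJ
  intro h
  have : x * y ∈ I * J := Ideal.mul_mem_mul hxI hyJ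
  rw [h] at this
  exact mul_ne_zero hx hy (by simpa using this)


lemma smul_mem_algebraMap_range (hc : CancelsFG D) (I : Ideal D) (hI0 : I ≠ 0) (hIfg : I.FG)
    (u : K) (hu : ∀ x ∈ (I : FractionalIdeal (nonZeroDivisors D) K), u * x ∈
      (I : FractionalIdeal (nonZeroDivisors D) K)) :
    ∃ d : D, algebraMap D K d = u := by
  obtain ⟨⟨p, q⟩, rfl⟩ := IsLocalization.mk'_surjective (nonZeroDivisors D) u
  have hq0 : (q : D) ≠ 0 := nonZeroDivisors.ne_zero q.2
  have hspec : IsLocalization.mk' K p q * algebraMap D K q = algebraMap D K p :=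
    IsLocalization.mk'_spec K p q
  have key : Ideal.span {p} ⊔ Ideal.span {(q : D)} = Ideal.span {(q : D)} := by
    apply hc I hI0 hIfg
    · exact fun h => by
        simpa [Ideal.span_singleton_eq_bot] using (le_sup_right.trans h.le :
          Ideal.span {(q : D)} ≤ ⊥)
    · exact fun h => hq0 (by simpa [Ideal.span_singleton_eq_bot] using h)
    · rw [Ideal.mul_sup]
      refine sup_eq_right.mpr ?_
      rw [Ideal.mul_le]
      intro r hr s hs
      obtain ⟨t, rfl⟩ := Ideal.mem_span_singleton'.mp hs
      obtain ⟨y, hyI, hy⟩ := (mem_coeIdeal _).mp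
        (hu (algebraMap D K r) ((mem_coeIdeal _).mpr ⟨r, hr, rfl⟩))
      have : algebraMap D K (r * p) = algebraMap D K (y * ↑q) := by
        rw [_root_.map_mul, _root_.map_mul, ← hspec, hy]; ring
      have hrp : r * p = y * ↑q := IsFractionRing.injective D K this
      have : r * (t * p) = (t * y) * ↑q := by rw [mul_left_comm, hrp]; ring
      rw [this]
      exact Ideal.mul_mem_mul (I.mul_mem_left t hyI) (Ideal.mem_span_singleton_self _)
  have hp : p ∈ Ideal.span {(q : D)} := by
    rw [← key]; exact Submodule.mem_sup_left (Ideal.mem_span_singleton_self p)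
  obtain ⟨d, hd⟩ := Ideal.mem_span_singleton'.mp hp
  refine ⟨d, ?_⟩
  have hqK : algebraMap D K q ≠ 0 :=
    fun h => hq0 (IsFractionRing.injective D K (by simpa using h))
  apply mul_right_cancel₀ hqK
  rw [hspec, ← hd, _root_.map_mul]


lemma cube_eq (C B : Ideal D) :
    (C + B) * ((C + B) * (C + B)) = (C + B) * (C * C + B * B) := by
  have idem : ∀ X : Ideal D, X + X = X := fun X => by
    rw [Ideal.add_eq_sup, sup_idem]
  have h2 : (C + B) * (C + B) = C * C + C * B + B * B := by
    have e : (C + B) * (C + B) = C * C + (C * B + C * B) + B * B := by ring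
    rw [e, idem]
  rw [h2]
  have e1 : (C + B) * (C * C + C * B + B * B)
      = C*C*C + B*B*B + ((C*C*B + C*C*B) + (C*B*B + C*B*B)) := by ring
  have e2 : (C + B) * (C * C + B * B) = C*C*C + B*B*B + (C*C*B + C*B*B) := by ring
  rw [e1, e2, idem, idem]

lemma fmul_mono {A A' B B' : FractionalIdeal (nonZeroDivisors D) K}
    (h : A ≤ A') (h' : B ≤ B') : A * B ≤ A' * B' :=
  mul_le.mpr fun i hi j hj => mul_mem_mul (h hi) (h' hj)


lemma invertible_of_span_finset (hc : CancelsFG D) (s : Finset D)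
    (hne : Ideal.span (s : Set D) ≠ 0) :
    ∃ T : FractionalIdeal (nonZeroDivisors D) K,
      (↑(Ideal.span (s : Set D)) : FractionalIdeal (nonZeroDivisors D) K) * T = 1 := by
  classical
  induction s using Finset.induction_on with
  | empty => exact absurd (by simp) hne
  | @insert c s hcs ih =>
    have hspan : Ideal.span (↑(insert c s) : Set D)
        = Ideal.span {c} ⊔ Ideal.span (s : Set D) := by
      rw [Finset.coe_insert, Ideal.span_insert]
    by_cases hc0 : c = 0
    · subst hc0
      have h0 : Ideal.span ({(0:D)} : Set D) = ⊥ := by simp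
      rw [hspan, h0, bot_sup_eq] at hne ⊢
      exact ih hne
    by_cases hB0 : Ideal.span (s : Set D) = 0
    · have hcK : algebraMap D K c ≠ 0 :=
        fun h => hc0 (IsFractionRing.injective D K (by simpa using h))
      refine ⟨spanSingleton (nonZeroDivisors D) (algebraMap D K c)⁻¹, ?_⟩
      rw [hspan, hB0]
      have : (Ideal.span {c} ⊔ (0 : Ideal D)) = Ideal.span {c} := by simp
      rw [this, coeIdeal_span_singleton, spanSingleton_mul_spanSingleton,
        mul_inv_cancel₀ hcK, spanSingleton_one]
    -- main case
    obtain ⟨T, hT⟩ := ih hB0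
    set B : Ideal D := Ideal.span (s : Set D) with hBdef
    set C : Ideal D := Ideal.span {c} with hCdef
    set c' : K := algebraMap D K c with hc'def
    have hI0 : C ⊔ B ≠ 0 := fun h => hB0 (by
      simpa [Ideal.span_singleton_eq_bot] using (le_sup_right.trans h.le : B ≤ ⊥))
    have hIfg : (C ⊔ B).FG := ⟨insert c s, hspan⟩
    have hC0 : C ≠ 0 := by simpa [hCdef, Ideal.span_singleton_eq_bot] using hc0
    -- square identity via cancellation
    have sq : (C ⊔ B) * (C ⊔ B) = C * C ⊔ B * B := by
      apply hc (C ⊔ B) hI0 hIfg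
      · exact ideal_mul_ne_zero hI0 hI0
      · exact fun h => (ideal_mul_ne_zero hB0 hB0) (by
          simpa using (le_sup_right.trans h.le : B * B ≤ ⊥))
      · have := cube_eq C B
        rw [Ideal.add_eq_sup, Ideal.add_eq_sup] at this
        exact this
    have hsub : C * B ≤ C * C ⊔ B * B := by
      rw [← sq]
      exact Ideal.mul_mono le_sup_left le_sup_right
    -- move to fractional ideals
    set Bf : FractionalIdeal (nonZeroDivisors D) K := ↑B with hBfdef
    have h1 : spanSingleton (nonZeroDivisors D) c' * Bf
        ≤ Bf * Bf + spanSingleton (nonZeroDivisors D) c' * spanSingleton (nonZeroDivisors D) c' := by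
      have := (coeIdeal_le_coeIdeal K).mpr hsub
      rwa [coeIdeal_mul, coeIdeal_sup, coeIdeal_mul, coeIdeal_mul,
        coeIdeal_span_singleton, add_comm] at this
    -- extract the relation c' = β + c'^2 γ
    have h2 : spanSingleton (nonZeroDivisors D) c'
        ≤ Bf + spanSingleton (nonZeroDivisors D) (c' * c') * T := by
      calc spanSingleton (nonZeroDivisors D) c'
          = spanSingleton (nonZeroDivisors D) c' * (Bf * T) := by rw [hT, mul_one]
        _ = spanSingleton (nonZeroDivisors D) c' * Bf * T := by rw [mul_assoc]
        _ ≤ (Bf * Bf + spanSingleton (nonZeroDivisors D) c'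
              * spanSingleton (nonZeroDivisors D) c') * T := fmul_mono h1 le_rfl
        _ = Bf * (Bf * T) + spanSingleton (nonZeroDivisors D) (c' * c') * T := by
              rw [add_mul, mul_assoc, spanSingleton_mul_spanSingleton]
        _ = Bf + spanSingleton (nonZeroDivisors D) (c' * c') * T := by rw [hT, mul_one]
    have hc'mem : c' ∈ Bf + spanSingleton (nonZeroDivisors D) (c' * c') * T :=
      spanSingleton_le_iff_mem.mp h2
    rw [mem_add] at hc'mem
    obtain ⟨β, hβ, w, hw, hsum⟩ := hc'mem
    rw [← mem_coe, coe_mul, coe_spanSingleton] at hw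
    obtain ⟨γ, hγT, hγ⟩ := Submodule.mem_span_singleton_mul.mp hw
    have hγT' : γ ∈ T := mem_coe.mp hγT
    set u : K := c' * γ with hu_def
    have hrel : c' = β + c' * c' * γ := by rw [← hγ] at hsum; exact hsum.symm
    -- u multiplies the ideal into itself
    have hc'I : c' ∈ (↑(C ⊔ B) : FractionalIdeal (nonZeroDivisors D) K) :=
      (mem_coeIdeal _).mpr ⟨c, Submodule.mem_sup_left (Ideal.mem_span_singleton_self c), rfl⟩
    have hBI : Bf ≤ (↑(C ⊔ B) : FractionalIdeal (nonZeroDivisors D) K) :=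
      (coeIdeal_le_coeIdeal K).mpr le_sup_right
    have hβBf : β ∈ Bf := hβ
    have huc : u * c' ∈ (↑(C ⊔ B) : FractionalIdeal (nonZeroDivisors D) K) := by
      have e : u * c' = c' - β := by rw [hu_def]; linear_combination -hrel
      rw [e, ← mem_coe]
      exact Submodule.sub_mem _ (mem_coe.mpr hc'I) (mem_coe.mpr (hBI hβBf))
    have hu : ∀ x ∈ (↑(C ⊔ B) : FractionalIdeal (nonZeroDivisors D) K),
        u * x ∈ (↑(C ⊔ B) : FractionalIdeal (nonZeroDivisors D) K) := by
      intro x hx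
      obtain ⟨r, hr, rfl⟩ := (mem_coeIdeal _).mp hx
      obtain ⟨t, htC, b, hbB, rfl⟩ := Submodule.mem_sup.mp hr
      obtain ⟨e, rfl⟩ := Ideal.mem_span_singleton'.mp htC
      have hub : u * algebraMap D K b ∈ (↑(C ⊔ B) : FractionalIdeal (nonZeroDivisors D) K) := by
        have hbBf : algebraMap D K b ∈ Bf := (mem_coeIdeal _).mpr ⟨b, hbB, rfl⟩
        have hγb : γ * algebraMap D K b ∈ (1 : FractionalIdeal (nonZeroDivisors D) K) := by
          have h' := mul_mem_mul hγT' hbBf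
          rwa [mul_comm T Bf, hT] at h'
        obtain ⟨d0, hd0⟩ := (mem_one_iff _).mp hγb
        have e2 : u * algebraMap D K b = algebraMap D K (c * d0) := by
          rw [hu_def, _root_.map_mul, hc'def]
          linear_combination (-(algebraMap D K c)) * hd0
        rw [e2]
        exact (mem_coeIdeal _).mpr ⟨c * d0,
          Ideal.mul_mem_right d0 _ (Submodule.mem_sup_left (Ideal.mem_span_singleton_self c)), rfl⟩
      have e3 : u * algebraMap D K (e * c + b)
          = e • (u * c') + u * algebraMap D K b := by
        rw [_root_.map_add, _root_.map_mul, Algebra.smul_def, hc'def]; ring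
      rw [e3, ← mem_coe]
      exact Submodule.add_mem _ (Submodule.smul_mem _ e (mem_coe.mpr huc))
        (mem_coe.mpr hub)
    obtain ⟨d, hd⟩ := smul_mem_algebraMap_range hc (C ⊔ B) hI0 hIfg u hu
    -- the inverse
    refine ⟨spanSingleton (nonZeroDivisors D) (1 - u) * T
      + spanSingleton (nonZeroDivisors D) γ, ?_⟩
    rw [hspan]
    have hIC : (↑(C ⊔ B) : FractionalIdeal (nonZeroDivisors D) K)
        = spanSingleton (nonZeroDivisors D) c' + Bf := by
      rw [coeIdeal_sup, coeIdeal_span_singleton, hc'def]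
    have hbeta : c' * (1 - u) = β := by rw [hu_def]; linear_combination hrel
    have h1u : (1 : K) - u = algebraMap D K (1 - d) := by
      rw [map_sub, _root_.map_one, hd]
    have hadd_le : ∀ X Y : FractionalIdeal (nonZeroDivisors D) K,
        X ≤ 1 → Y ≤ 1 → X + Y ≤ 1 := by
      intro X Y hX hY
      rw [← sup_eq_add]
      exact sup_le hX hY
    apply le_antisymm
    · rw [hIC]
      have expand : (spanSingleton (nonZeroDivisors D) c' + Bf)
          * (spanSingleton (nonZeroDivisors D) (1 - u) * T + spanSingleton (nonZeroDivisors D) γ)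
          = (spanSingleton (nonZeroDivisors D) c' * (spanSingleton (nonZeroDivisors D) (1 - u) * T)
            + spanSingleton (nonZeroDivisors D) c' * spanSingleton (nonZeroDivisors D) γ)
            + (Bf * (spanSingleton (nonZeroDivisors D) (1 - u) * T)
            + Bf * spanSingleton (nonZeroDivisors D) γ) := by ring
      rw [expand]
      apply hadd_le
      apply hadd_le
      · rw [← mul_assoc, spanSingleton_mul_spanSingleton, hbeta, ← hT]
        exact fmul_mono (spanSingleton_le_iff_mem.mpr hβBf) le_rfl
      · rw [spanSingleton_mul_spanSingleton, ← hu_def]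
        exact spanSingleton_le_iff_mem.mpr ((mem_one_iff _).mpr ⟨d, hd⟩)
      apply hadd_le
      · have hle1 : spanSingleton (nonZeroDivisors D) (1 - u)
            ≤ (1 : FractionalIdeal (nonZeroDivisors D) K) :=
          spanSingleton_le_iff_mem.mpr ((mem_one_iff _).mpr ⟨1 - d, h1u.symm⟩)
        calc Bf * (spanSingleton (nonZeroDivisors D) (1 - u) * T)
            ≤ Bf * (1 * T) := fmul_mono le_rfl (fmul_mono hle1 le_rfl)
          _ = 1 := by rw [one_mul, hT]
      · calc Bf * spanSingleton (nonZeroDivisors D) γ ≤ Bf * T :=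
            fmul_mono le_rfl (spanSingleton_le_iff_mem.mpr hγT')
          _ = 1 := hT
    · rw [FractionalIdeal.one_le]
      have hmem1 : (1 : K) ∈ Bf * T := by rw [hT]; exact one_mem_one _
      have hu_mem : u ∈ (↑(C ⊔ B) : FractionalIdeal (nonZeroDivisors D) K)
          * (spanSingleton (nonZeroDivisors D) (1 - u) * T
            + spanSingleton (nonZeroDivisors D) γ) := by
        rw [hu_def]
        refine mul_mem_mul hc'I ?_
        rw [mem_add]
        exact ⟨0, zero_mem _, γ, mem_spanSingleton_self _ γ, zero_add γ⟩
      have h1u_mem : (1 : K) - u ∈ (↑(C ⊔ B) : FractionalIdeal (nonZeroDivisors D) K)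
          * (spanSingleton (nonZeroDivisors D) (1 - u) * T
            + spanSingleton (nonZeroDivisors D) γ) := by
        have hm : (1 - u) * 1 ∈ spanSingleton (nonZeroDivisors D) (1 - u) * (Bf * T) :=
          mul_mem_mul (mem_spanSingleton_self _ _) hmem1
        rw [mul_one] at hm
        have hle : spanSingleton (nonZeroDivisors D) (1 - u) * (Bf * T)
            ≤ (↑(C ⊔ B) : FractionalIdeal (nonZeroDivisors D) K)
              * (spanSingleton (nonZeroDivisors D) (1 - u) * T
                + spanSingleton (nonZeroDivisors D) γ) := by
          have e : spanSingleton (nonZeroDivisors D) (1 - u) * (Bf * T)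
              = Bf * (spanSingleton (nonZeroDivisors D) (1 - u) * T) := by ring
          rw [e]
          refine fmul_mono hBI ?_
          rw [← sup_eq_add]
          exact le_sup_left
        exact hle hm
      have := Submodule.add_mem _ (mem_coe.mpr h1u_mem) (mem_coe.mpr hu_mem)
      rw [sub_add_cancel] at this
      exact mem_coe.mp this


lemma cancels_to_prufer (hcan : CancelsFG D) (I : FractionalIdeal (nonZeroDivisors D) K)
    (hI0 : I ≠ 0) (hIfg : (I : Submodule D K).FG) : I * I⁻¹ = 1 := by
  obtain ⟨a, aI, ha, haI⟩ := exists_eq_spanSingleton_mul I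
  have haK : algebraMap D K a ≠ 0 :=
    fun h => ha (IsFractionRing.injective D K (by simpa using h))
  have hIaI : spanSingleton (nonZeroDivisors D) (algebraMap D K a) * I = ↑aI := by
    rw [haI, ← mul_assoc, spanSingleton_mul_spanSingleton, mul_inv_cancel₀ haK,
      spanSingleton_one, one_mul]
  have haI0 : aI ≠ 0 := by
    intro h
    rw [h] at haI
    simp at haI
    exact hI0 haI
  have haIfg : aI.FG := by
    have hsub : ((↑aI : FractionalIdeal (nonZeroDivisors D) K) : Submodule D K)
        = Submodule.span D {algebraMap D K a} * (I : Submodule D K) := by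
      rw [← hIaI, coe_mul, coe_spanSingleton]
    have hfg : ((↑aI : FractionalIdeal (nonZeroDivisors D) K) : Submodule D K).FG := by
      rw [hsub]
      exact Submodule.FG.mul (Submodule.fg_span_singleton _) hIfg
    have e : Submodule.map (Algebra.linearMap D K) aI
        = ((↑aI : FractionalIdeal (nonZeroDivisors D) K) : Submodule D K) := by
      rw [coe_coeIdeal, IsLocalization.coeSubmodule]
    apply Submodule.fg_of_fg_map_injective (Algebra.linearMap D K)
    · exact IsFractionRing.injective D K
    · rw [e]; exact hfg
  obtain ⟨t, ht⟩ := haIfg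
  have ht0 : Ideal.span (t : Set D) ≠ 0 := by rw [ht]; exact haI0
  obtain ⟨T, hT⟩ := invertible_of_span_finset hcan t ht0
  rw [ht] at hT
  rw [mul_inv_cancel_iff]
  refine ⟨spanSingleton (nonZeroDivisors D) (algebraMap D K a) * T, ?_⟩
  rw [← mul_assoc, mul_comm I, hIaI, hT]

end Aux

/-- `D` is a Prüfer domain: every nonzero finitely generated fractional ideal is
invertible. -/
def IsPruferDomain (D : Type*) [CommRing D] [IsDomain D] : Prop :=
  ∀ I : FractionalIdeal (nonZeroDivisors D) (FractionRing D),
    I ≠ 0 → (I : Submodule D (FractionRing D)).FG → I * I⁻¹ = 1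

/-- Every nonzero finitely generated ideal of `D` is a cancellation ideal iff `D` is
a Prüfer domain. -/
theorem fg_cancellation_iff_prufer (D : Type*) [CommRing D] [IsDomain D] :
    (∀ I : Ideal D, I ≠ 0 → I.FG →
        ∀ G H : Ideal D, G ≠ 0 → H ≠ 0 → I * G = I * H → G = H) ↔
    IsPruferDomain D := by
  constructor
  · intro hcan I hI0 hIfg
    exact cancels_to_prufer hcan I hI0 hIfg
  · intro hP I hI0 hIfg G H hG0 hH0 hGH
    have h1 : (↑I : FractionalIdeal (nonZeroDivisors D) (FractionRing D))
        * (↑I : FractionalIdeal (nonZeroDivisors D) (FractionRing D))⁻¹ = 1 :=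
      hP _ (coeIdeal_ne_zero.mpr hI0) (coeIdeal_fg' hIfg)
    have h2 : (↑(I * G) : FractionalIdeal (nonZeroDivisors D) (FractionRing D)) = ↑(I * H) := by
      rw [hGH]
    rw [coeIdeal_mul, coeIdeal_mul] at h2
    apply FractionalIdeal.coeIdeal_injective (K := FractionRing D)
    calc (↑G : FractionalIdeal (nonZeroDivisors D) (FractionRing D))
        = (↑I * (↑I)⁻¹) * ↑G := by rw [h1, one_mul]
      _ = (↑I)⁻¹ * (↑I * ↑G) := by ring
      _ = (↑I)⁻¹ * (↑I * ↑H) := by rw [h2]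
      _ = (↑I * (↑I)⁻¹) * ↑H := by ring
      _ = ↑H := by rw [h1, one_mul]
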